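/- For k > 2 and any even r with 0 ≤ r ≤ 2k−2, the number of conjugation-unstable ways to split the multiset of roots of a degree-(2k−2) squarefree real polynomial (with r real roots) into an ordered pair of blocks of size k−1 each is divisible by 4; consequently C(2k−2, k−1) − ν(k, 2k, r) ≡ 0 (mod 4). -/

import Mathlib

open Polynomial

/-- ν(k, n, r): the coefficient of x^{n−k−1} y^{k−1} in (x+y)^r (x²+y²)^{(n−2−r)/2}. -/
noncomputable def nu (k n r : ℕ) : ℕ :=
  MvPolynomial.coeff (Finsupp.single 0 (n - k - 1) + Finsupp.single 1 (k - 1))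
    (((MvPolynomial.X 0 + MvPolynomial.X 1) ^ r *
      (MvPolynomial.X 0 ^ 2 + MvPolynomial.X 1 ^ 2) ^ ((n - 2 - r) / 2) :
        MvPolynomial (Fin 2) ℕ))

/-- A complex polynomial has all real coefficients. -/
def IsRealPoly (g : Polynomial ℂ) : Prop := ∀ i, (g.coeff i).im = 0

/-!
Over `ℂ` the roots of `p` are distinct, so ordered factorizations `p = g * h` into monic factors
of degree `k - 1` correspond to the `(k - 1)`-subsets `A` of the root set `R` (with `g` the
product over `A`), and the factorization is real iff `A` is stable under complex conjugation `σ`.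
The Klein group generated by `σ` and complementation `A ↦ R \ A` acts freely on the unstable `A`
with `σ A ≠ R \ A`. The remaining unstable `A` satisfy `σ A = R \ A`, i.e. they pick one root
out of every conjugate pair; on them `σ` and the transposition `τ` of one fixed conjugate pair
generate a free Klein group action, because there are at least two pairs. So 4 divides the count.

For the congruence, modulo 4 we have `x² + y² = (x + y)² - 2xy`, hence
`(x + y)^(2s) (x² + y²)^t ≡ (x + y)^(2n) - 2t·xy·(x + y)^(2n - 2)` where `n = s + t`, and the
coefficient of `x^n y^n` in the correction is `2t` times the even number `C(2n - 2, n - 1)`.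
-/

open Finset
open scoped Pointwise

theorem four_dvd_card_of_commuting_involutions {α : Type*} [DecidableEq α] (f g : α → α)
    (T : Finset α)
    (hfT : ∀ a ∈ T, f a ∈ T) (hgT : ∀ a ∈ T, g a ∈ T)
    (hff : ∀ a ∈ T, f (f a) = a) (hgg : ∀ a ∈ T, g (g a) = a)
    (hcomm : ∀ a ∈ T, f (g a) = g (f a))
    (hf : ∀ a ∈ T, f a ≠ a) (hg : ∀ a ∈ T, g a ≠ a)
    (hfg : ∀ a ∈ T, f (g a) ≠ a) :
    4 ∣ #T := by
  suffices ∀ S ⊆ T, (∀ a ∈ S, f a ∈ S ∧ g a ∈ S) → 4 ∣ #S from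
    this T subset_rfl fun a ha => ⟨hfT a ha, hgT a ha⟩
  intro S
  induction S using Finset.strongInduction with
  | H S ih =>
  intro hST hS
  obtain rfl | ⟨a, ha⟩ := S.eq_empty_or_nonempty
  · simp
  have haT := hST ha
  have hgaT := hgT a haT
  -- the orbit of `a` under the Klein group generated by `f` and `g`
  set O : Finset α := {a, f a, g a, f (g a)} with hO
  have hOS : O ⊆ S := by simp [O, insert_subset_iff, ha, hS]
  have hOcard : #O = 4 := by
    have h1 : f a ≠ g a := fun h => hfg a haT (by rw [← h, hff a haT])
    have h2 : f a ≠ f (g a) := fun h => hg a haT (by rw [← hff _ hgaT, ← h, hff a haT])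
    rw [card_insert_of_notMem (by simp [(hf a haT).symm, (hg a haT).symm, (hfg a haT).symm]),
      card_insert_of_notMem (by simp [h1, h2]),
      card_insert_of_notMem (by simp [(hf _ hgaT).symm]), card_singleton]
  have hfO : ∀ x ∈ O, f x ∈ O := by
    simp only [hO, mem_insert, mem_singleton]
    rintro x (rfl | rfl | rfl | rfl) <;> simp [hff, haT, hgaT]
  have hgO : ∀ x ∈ O, g x ∈ O := by
    simp only [hO, mem_insert, mem_singleton]
    rintro x (rfl | rfl | rfl | rfl) <;> simp [hgg, hcomm, haT, hfT]
  have hrest : ∀ x ∈ S \ O, f x ∈ S \ O ∧ g x ∈ S \ O := by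
    intro x hx
    simp only [mem_sdiff] at hx ⊢
    have hxT := hST hx.1
    exact ⟨⟨(hS x hx.1).1, fun h => hx.2 (hff x hxT ▸ hfO _ h)⟩,
      ⟨(hS x hx.1).2, fun h => hx.2 (hgg x hxT ▸ hgO _ h)⟩⟩
  rw [← card_sdiff_add_card_eq_card hOS, hOcard]
  exact dvd_add (ih _ (sdiff_ssubset hOS ⟨a, by simp [O]⟩) (sdiff_subset.trans hST) hrest)
    dvd_rfl

section Halves

open Equiv

variable {α : Type*} [DecidableEq α] {R A : Finset α} {m : ℕ}

lemma sdiff_mem_powersetCard (hR : #R = 2 * m) (hA : A ∈ R.powersetCard m) :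
    R \ A ∈ R.powersetCard m := by
  rw [mem_powersetCard] at hA ⊢
  exact ⟨sdiff_subset, by rw [card_sdiff_of_subset hA.1, hR, hA.2]; omega⟩

lemma sdiff_ne_self_of_mem_powersetCard (hm : 0 < m) (hA : A ∈ R.powersetCard m) :
    R \ A ≠ A := by
  intro h
  have hdisj : Disjoint (R \ A) A := sdiff_disjoint
  rw [h, disjoint_self_iff_empty] at hdisj
  rw [mem_powersetCard, hdisj, card_empty] at hA
  omega

lemma smul_mem_powersetCard (π : Perm α) (hR : π • R = R) (hA : A ∈ R.powersetCard m) :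
    π • A ∈ R.powersetCard m := by
  rw [mem_powersetCard] at hA ⊢
  exact ⟨hR ▸ smul_finset_subset_smul_finset hA.1, by rw [card_smul_finset, hA.2]⟩

lemma swap_smul_finset_eq_self {x y : α} (hx : x ∈ R) (hy : y ∈ R) : swap x y • R = R := by
  ext z
  rw [← inv_smul_mem_iff, swap_inv, Perm.smul_def]
  by_cases hzx : z = x
  · subst hzx; simp [hx, hy]
  by_cases hzy : z = y
  · subst hzy; simp [hx, hy]
  rw [swap_apply_of_ne_of_ne hzx hzy]

variable {σ : Perm α}

lemma mem_iff_apply_notMem_of_smul_eq_sdiff (hR : σ • R = R) (hA : σ • A = R \ A) {x : α}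
    (hx : x ∈ R) : x ∈ A ↔ σ x ∉ A := by
  have hσx : σ x ∈ R := hR ▸ smul_mem_smul_finset hx
  rw [← smul_mem_smul_finset_iff σ, hA, mem_sdiff, Perm.smul_def]
  exact and_iff_right hσx

lemma swap_smul_ne_self_of_smul_eq_sdiff (hR : σ • R = R) (hA : σ • A = R \ A) {β : α}
    (hβ : β ∈ R) : swap β (σ β) • A ≠ A := by
  intro h
  have hβA := mem_iff_apply_notMem_of_smul_eq_sdiff hR hA hβ
  rw [← smul_mem_smul_finset_iff (swap β (σ β)), h, Perm.smul_def, swap_apply_left] at hβA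
  tauto

lemma smul_swap_smul_ne_self_of_smul_eq_sdiff (hR : σ • R = R) (hA : σ • A = R \ A)
    (hAR : A ⊆ R) (hA₂ : 1 < #A) (β : α) : σ • swap β (σ β) • A ≠ A := by
  intro h
  have hmem : ∀ x ∈ A, x = β ∨ x = σ β := by
    intro x hx
    by_contra! hne
    have : σ x ∈ A := by
      rw [← h, ← swap_apply_of_ne_of_ne hne.1 hne.2]
      exact smul_mem_smul_finset (smul_mem_smul_finset hx)
    exact (mem_iff_apply_notMem_of_smul_eq_sdiff hR hA (hAR hx)).1 hx this
  obtain ⟨γ, hγ, δ, hδ, hγδ⟩ := one_lt_card.1 hA₂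
  have hboth : β ∈ A ∧ σ β ∈ A := by
    rcases hmem γ hγ with rfl | rfl <;> rcases hmem δ hδ with rfl | rfl <;> tauto
  exact (mem_iff_apply_notMem_of_smul_eq_sdiff hR hA (hAR hboth.1)).1 hboth.1 hboth.2

theorem four_dvd_card_smul_ne_self_smul_ne_sdiff (hσ : σ * σ = 1) (hR : σ • R = R)
    (hm : 0 < m) (hcard : #R = 2 * m) :
    4 ∣ #{A ∈ R.powersetCard m | σ • A ≠ A ∧ σ • A ≠ R \ A} := by
  have hσσ (A : Finset α) : σ • σ • A = A := by rw [smul_smul, hσ, one_smul]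
  have hcomm (A : Finset α) : σ • (R \ A) = R \ σ • A := by rw [smul_finset_sdiff, hR]
  have hsymm {X Y : Finset α} (hX : X ∈ R.powersetCard m) (hY : Y ∈ R.powersetCard m) :
      X ≠ R \ Y ↔ Y ≠ R \ X := by
    rw [ne_comm, ne_comm (a := Y), Ne, Ne,
      sdiff_eq_comm (mem_powersetCard.1 hY).1 (mem_powersetCard.1 hX).1]
  apply four_dvd_card_of_commuting_involutions (σ • ·) (R \ ·)
  all_goals simp only [mem_filter]
  · rintro A ⟨hA, hσA, hσAc⟩
    have hσA' := smul_mem_powersetCard σ hR hA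
    refine ⟨hσA', by rwa [hσσ, ne_comm], ?_⟩
    rwa [hσσ, hsymm hA hσA']
  · rintro A ⟨hA, hσA, hσAc⟩
    have hσA' := smul_mem_powersetCard σ hR hA
    refine ⟨sdiff_mem_powersetCard hcard hA, ?_, ?_⟩
    · rw [hcomm, Ne, sdiff_eq_comm (mem_powersetCard.1 hσA').1 sdiff_subset,
        Finset.sdiff_sdiff_eq_self (mem_powersetCard.1 hA).1]
      exact hσA.symm
    · rwa [hcomm, Finset.sdiff_sdiff_eq_self (mem_powersetCard.1 hA).1, ne_comm,
        hsymm hA hσA']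
  · intro A _; exact hσσ A
  · rintro A ⟨hA, -⟩; exact Finset.sdiff_sdiff_eq_self (mem_powersetCard.1 hA).1
  · intro A _; exact hcomm A
  · rintro A ⟨-, hσA, -⟩; exact hσA
  · rintro A ⟨hA, -⟩; exact sdiff_ne_self_of_mem_powersetCard hm hA
  · rintro A ⟨hA, -, hσAc⟩
    rwa [hcomm, ne_comm, hsymm hA (smul_mem_powersetCard σ hR hA)]

theorem four_dvd_card_smul_eq_sdiff (hσ : σ * σ = 1) (hR : σ • R = R) (hm : 2 ≤ m) :
    4 ∣ #{A ∈ R.powersetCard m | σ • A = R \ A} := by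
  set T := {A ∈ R.powersetCard m | σ • A = R \ A}
  obtain h | ⟨A₀, hA₀⟩ := T.eq_empty_or_nonempty
  · simp [h]
  rw [mem_filter, mem_powersetCard] at hA₀
  obtain ⟨β, hβ⟩ : A₀.Nonempty := card_pos.1 (by omega)
  have hβR : β ∈ R := hA₀.1.1 hβ
  have hσβR : σ β ∈ R := hR ▸ smul_mem_smul_finset hβR
  -- `τ` commutes with `σ` because `σ` swaps `β` and `σ β`
  set τ := swap β (σ β)
  have hστ : σ * τ = τ * σ := by
    have : swap (σ β) (σ (σ β)) = σ * τ * σ⁻¹ := swap_apply_apply σ β (σ β)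
    rw [← Perm.mul_apply, hσ, Perm.one_apply, swap_comm] at this
    exact (eq_mul_inv_iff_mul_eq.1 this).symm
  have hτR : τ • R = R := swap_smul_finset_eq_self hβR hσβR
  have hσσ (A : Finset α) : σ • σ • A = A := by rw [smul_smul, hσ, one_smul]
  apply four_dvd_card_of_commuting_involutions (σ • ·) (τ • ·)
  all_goals simp only [T, mem_filter]
  · rintro A ⟨hA, hσA⟩
    refine ⟨smul_mem_powersetCard σ hR hA, ?_⟩
    rw [hσσ, hσA, Finset.sdiff_sdiff_eq_self (mem_powersetCard.1 hA).1]
  · rintro A ⟨hA, hσA⟩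
    refine ⟨smul_mem_powersetCard τ hτR hA, ?_⟩
    rw [smul_smul, hστ, mul_smul, hσA, smul_finset_sdiff, hτR]
  · intro A _; exact hσσ A
  · intro A _; rw [smul_smul, swap_mul_self, one_smul]
  · intro A _; rw [smul_smul, smul_smul, hστ]
  · rintro A ⟨hA, hσA⟩
    rw [hσA]
    exact sdiff_ne_self_of_mem_powersetCard (by omega) hA
  · rintro A ⟨-, hσA⟩
    exact swap_smul_ne_self_of_smul_eq_sdiff hR hσA hβR
  · rintro A ⟨hA, hσA⟩
    rw [mem_powersetCard] at hA
    exact smul_swap_smul_ne_self_of_smul_eq_sdiff hR hσA hA.1 (by omega) β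

theorem four_dvd_card_smul_ne_self (hσ : σ * σ = 1) (hR : σ • R = R) (hm : 2 ≤ m)
    (hcard : #R = 2 * m) :
    4 ∣ #{A ∈ R.powersetCard m | σ • A ≠ A} := by
  rw [← card_filter_add_card_filter_not (fun A => σ • A = R \ A), filter_filter, filter_filter]
  have hsplit : {A ∈ R.powersetCard m | σ • A ≠ A ∧ σ • A = R \ A} =
      {A ∈ R.powersetCard m | σ • A = R \ A} := by
    refine filter_congr fun A hA => and_iff_right_of_imp fun h => ?_
    rw [h]
    exact sdiff_ne_self_of_mem_powersetCard (by omega) hA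
  rw [hsplit]
  exact dvd_add (four_dvd_card_smul_eq_sdiff hσ hR hm)
    (four_dvd_card_smul_ne_self_smul_ne_sdiff hσ hR (by omega) hcard)

end Halves

theorem prod_X_sub_C_inj {R : Type*} [CommRing R] [IsDomain R] {s t : Finset R} :
    ∏ a ∈ s, (X - C a) = ∏ a ∈ t, (X - C a) ↔ s = t := by
  refine ⟨fun h => ?_, fun h => h ▸ rfl⟩
  have := congrArg roots h
  rwa [roots_prod_X_sub_C, roots_prod_X_sub_C, val_inj] at this

theorem map_prod_X_sub_C {R S : Type*} [CommRing R] [CommRing S] [DecidableEq S] (φ : R →+* S)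
    (hφ : Function.Injective φ) (s : Finset R) :
    (∏ a ∈ s, (X - C a)).map φ = ∏ a ∈ s.image φ, (X - C a) := by
  rw [Polynomial.map_prod, prod_image hφ.injOn]
  simp only [Polynomial.map_sub, map_X, map_C]

section Factorizations

variable {K : Type*} [Field K] [IsAlgClosed K] [DecidableEq K]

theorem prod_X_sub_C_roots_toFinset {g : K[X]} (hg : g.Monic) (hnodup : g.roots.Nodup) :
    ∏ a ∈ g.roots.toFinset, (X - C a) = g := by
  rw [prod_eq_multiset_prod, Multiset.toFinset_val, Multiset.dedup_eq_self.2 hnodup]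
  exact prod_multiset_X_sub_C_of_monic_of_roots_card_eq hg IsAlgClosed.card_roots_eq_natDegree

theorem card_roots_toFinset {g : K[X]} (hnodup : g.roots.Nodup) :
    #g.roots.toFinset = g.natDegree := by
  rw [Multiset.toFinset_card_of_nodup hnodup, IsAlgClosed.card_roots_eq_natDegree]

theorem ncard_factorizations_eq_card_powersetCard {P : K[X]} (hP : P.Monic)
    (hnodup : P.roots.Nodup) {d : ℕ} (hdeg : P.natDegree = 2 * d) (Q : K[X] × K[X] → Prop)
    [DecidablePred Q] :
    {q : K[X] × K[X] | q.1.Monic ∧ q.2.Monic ∧ q.1.natDegree = d ∧ q.2.natDegree = d ∧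
      P = q.1 * q.2 ∧ Q q}.ncard =
    #{A ∈ P.roots.toFinset.powersetCard d |
      Q (∏ a ∈ A, (X - C a), ∏ a ∈ P.roots.toFinset \ A, (X - C a))} := by
  set R := P.roots.toFinset
  have hPR : ∏ a ∈ R, (X - C a) = P := prod_X_sub_C_roots_toFinset hP hnodup
  rw [← Set.ncard_coe_finset]
  refine (Set.ncard_congr (fun A _ => (∏ a ∈ A, (X - C a), ∏ a ∈ R \ A, (X - C a)))
    ?_ ?_ ?_).symm
  · intro A hA
    rw [mem_coe, mem_filter, mem_powersetCard] at hA
    refine ⟨monic_prod_X_sub_C _ _, monic_prod_X_sub_C _ _, ?_, ?_, ?_, hA.2⟩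
    · rw [natDegree_finsetProd_X_sub_C_eq_card, hA.1.2]
    · rw [natDegree_finsetProd_X_sub_C_eq_card, card_sdiff_of_subset hA.1.1, hA.1.2,
        card_roots_toFinset hnodup, hdeg]
      omega
    · rw [mul_comm, prod_sdiff hA.1.1, hPR]
  · intro A B _ _ h
    exact prod_X_sub_C_inj.1 (congrArg Prod.fst h)
  · rintro ⟨g, h⟩ ⟨hg, hh, hgdeg, -, hPgh, hQ⟩
    have hroots : P.roots = g.roots + h.roots := by
      rw [hPgh, roots_mul (hPgh ▸ hP.ne_zero)]
    have hgnodup : g.roots.Nodup := (Multiset.nodup_add.1 (hroots ▸ hnodup)).1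
    have hgR : g.roots.toFinset ⊆ R :=
      Multiset.toFinset_subset.2 (hroots ▸ Multiset.subset_of_le (Multiset.le_add_right _ _))
    have hg_eq : ∏ a ∈ g.roots.toFinset, (X - C a) = g := prod_X_sub_C_roots_toFinset hg hgnodup
    have hh_eq : ∏ a ∈ R \ g.roots.toFinset, (X - C a) = h := by
      refine mul_left_cancel₀ hg.ne_zero ?_
      rw [← hPgh, ← hPR, ← prod_sdiff hgR, hg_eq, mul_comm]
    refine ⟨g.roots.toFinset, ?_, ?_⟩
    · rw [mem_coe, mem_filter, mem_powersetCard, hg_eq, hh_eq]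
      exact ⟨⟨hgR, by rw [card_roots_toFinset hgnodup, hgdeg]⟩, hQ⟩
    · rw [hg_eq, hh_eq]

end Factorizations

theorem isRealPoly_map_algebraMap (p : ℝ[X]) : IsRealPoly (p.map (algebraMap ℝ ℂ)) := by
  intro i
  simp

theorem isRealPoly_iff_map_conj_eq (g : ℂ[X]) : IsRealPoly g ↔ g.map (starRingEnd ℂ) = g := by
  simp only [IsRealPoly, Polynomial.ext_iff, coeff_map, Complex.conj_eq_iff_im]

theorem isRealPoly_prod_X_sub_C_iff (s : Finset ℂ) :
    IsRealPoly (∏ a ∈ s, (X - C a)) ↔ (Equiv.Perm.star : Equiv.Perm ℂ) • s = s := by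
  rw [isRealPoly_iff_map_conj_eq, map_prod_X_sub_C _ (RingHom.injective _), prod_X_sub_C_inj]
  rfl

theorem four_dvd_ncard_nonreal_factorizations {P : ℂ[X]} (hP : P.Monic) (hreal : IsRealPoly P)
    (hnodup : P.roots.Nodup) {m : ℕ} (hm : 2 ≤ m) (hdeg : P.natDegree = 2 * m) :
    4 ∣ {q : ℂ[X] × ℂ[X] | q.1.Monic ∧ q.2.Monic ∧ q.1.natDegree = m ∧
      q.2.natDegree = m ∧ P = q.1 * q.2 ∧ ¬(IsRealPoly q.1 ∧ IsRealPoly q.2)}.ncard := by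
  classical
  set R := P.roots.toFinset
  set σ : Equiv.Perm ℂ := Equiv.Perm.star
  have hσ : σ * σ = 1 := Equiv.ext star_star
  have hσR : σ • R = R := by
    rwa [← isRealPoly_prod_X_sub_C_iff, prod_X_sub_C_roots_toFinset hP hnodup]
  rw [ncard_factorizations_eq_card_powersetCard hP hnodup hdeg]
  convert four_dvd_card_smul_ne_self hσ hσR hm (by rw [card_roots_toFinset hnodup, hdeg])
    using 2
  refine filter_congr fun A _ => ?_
  rw [isRealPoly_prod_X_sub_C_iff, isRealPoly_prod_X_sub_C_iff, smul_finset_sdiff, hσR]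
  exact ⟨fun h hA => h ⟨hA, by rw [hA]⟩, fun h hA => h hA.1⟩

section ModFour

variable {R : Type*} [CommRing R]

theorem add_two_mul_pow_of_four_eq_zero (h4 : (4 : R) = 0) (a b : R) (n : ℕ) :
    (a + 2 * b) ^ n = a ^ n + 2 * n * b * a ^ (n - 1) := by
  induction n with
  | zero => simp
  | succ n ih =>
    rw [pow_succ, ih]
    rcases n with _ | n
    · push_cast; ring
    · push_cast
      linear_combination ((n + 1) * b ^ 2 * a ^ n) * h4

theorem add_pow_mul_sq_add_sq_pow_of_four_eq_zero (h4 : (4 : R) = 0) (x y : R) (s t : ℕ) :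
    (x + y) ^ (2 * s) * (x ^ 2 + y ^ 2) ^ t =
      (x + y) ^ (2 * (s + t)) - 2 * t * (x * y) * (x + y) ^ (2 * (s + t - 1)) := by
  have hsq : x ^ 2 + y ^ 2 = (x + y) ^ 2 + 2 * -(x * y) := by ring
  rw [hsq, add_two_mul_pow_of_four_eq_zero h4, ← pow_mul, ← pow_mul]
  rcases t with _ | t
  · simp
  · rw [show s + (t + 1) - 1 = s + t by omega]
    push_cast
    ring

end ModFour

section CentralCoeff

open MvPolynomial

variable {R : Type*} [CommSemiring R]

theorem coeff_X_add_X_pow_two_mul (n : ℕ) :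
    MvPolynomial.coeff (Finsupp.single 0 n + Finsupp.single 1 n)
      ((X 0 + X 1) ^ (2 * n) : MvPolynomial (Fin 2) R) = (2 * n).choose n := by
  rw [coeff_add_pow, if_pos (by simp [two_mul])]
  simp

theorem coeff_X_mul_X_mul_X_add_X_pow_two_mul (n : ℕ) :
    MvPolynomial.coeff (Finsupp.single 0 (n + 1) + Finsupp.single 1 (n + 1))
      (X 0 * X 1 * (X 0 + X 1) ^ (2 * n) : MvPolynomial (Fin 2) R) = (2 * n).choose n := by
  have hshift : Finsupp.single (0 : Fin 2) (n + 1) + Finsupp.single 1 (n + 1) =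
      Finsupp.single 0 1 + (Finsupp.single 1 1 + (Finsupp.single 0 n + Finsupp.single 1 n)) := by
    ext i; fin_cases i <;> simp <;> ring
  rw [hshift, mul_assoc, MvPolynomial.coeff_X_mul, MvPolynomial.coeff_X_mul,
    coeff_X_add_X_pow_two_mul]

theorem natCast_coeff_add_pow_mul_sq_add_sq_pow {s t n : ℕ} (hst : s + t = n) (hn : 2 ≤ n) :
    ((MvPolynomial.coeff (Finsupp.single 0 n + Finsupp.single 1 n)
        ((X 0 + X 1) ^ (2 * s) * (X 0 ^ 2 + X 1 ^ 2) ^ t : MvPolynomial (Fin 2) ℕ) : ℕ) :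
      ZMod 4) = (2 * n).choose n := by
  have h4 : (4 : ZMod 4) = 0 := rfl
  have h4X : (4 : MvPolynomial (Fin 2) (ZMod 4)) = 0 := by
    rw [← map_ofNat MvPolynomial.C 4, h4, map_zero]
  obtain ⟨n, rfl⟩ : ∃ n', n = n' + 1 := ⟨n - 1, by omega⟩
  obtain ⟨c, hc⟩ : 2 ∣ (2 * n).choose n :=
    Nat.centralBinom_eq_two_mul_choose n ▸ Nat.two_dvd_centralBinom_of_one_le (by omega)
  rw [← eq_natCast (Nat.castRingHom (ZMod 4)) (MvPolynomial.coeff _ _),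
    ← MvPolynomial.coeff_map]
  simp only [map_mul, map_pow, map_add, MvPolynomial.map_X]
  rw [add_pow_mul_sq_add_sq_pow_of_four_eq_zero h4X, hst, Nat.add_sub_cancel,
    MvPolynomial.coeff_sub, coeff_X_add_X_pow_two_mul, ← map_ofNat MvPolynomial.C 2,
    ← map_natCast MvPolynomial.C t, ← map_mul, mul_assoc, MvPolynomial.coeff_C_mul,
    coeff_X_mul_X_mul_X_add_X_pow_two_mul, hc]
  push_cast
  linear_combination (-(t * c : ZMod 4)) * h4

end CentralCoeff

theorem natCast_nu_eq_choose {k r : ℕ} (hk : 2 < k) (hre : Even r) (hr : r ≤ 2 * k - 2) :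
    (nu k (2 * k) r : ZMod 4) = (2 * k - 2).choose (k - 1) := by
  obtain ⟨s, rfl⟩ := hre
  rw [nu, show 2 * k - k - 1 = k - 1 by omega,
    show (2 * k - 2 - (s + s)) / 2 = k - 1 - s by omega, show s + s = 2 * s by ring,
    show 2 * k - 2 = 2 * (k - 1) by omega]
  exact natCast_coeff_add_pow_mul_sq_add_sq_pow (by omega) (by omega)

theorem nonreal_splits_div_four (k r : ℕ) (hk : 2 < k) (hre : Even r)
    (hr : r ≤ 2 * k - 2) (p : Polynomial ℝ) (hp : p.Monic)
    (hdeg : p.natDegree = 2 * k - 2)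
    (hnodup : ((p.map (algebraMap ℝ ℂ)).roots).Nodup) :
    4 ∣ Set.ncard {q : Polynomial ℂ × Polynomial ℂ |
        q.1.Monic ∧ q.2.Monic ∧ q.1.natDegree = k - 1 ∧ q.2.natDegree = k - 1 ∧
        p.map (algebraMap ℝ ℂ) = q.1 * q.2 ∧
        ¬(IsRealPoly q.1 ∧ IsRealPoly q.2)} ∧
    (4 : ℤ) ∣ ((Nat.choose (2 * k - 2) (k - 1) : ℤ) - (nu k (2 * k) r : ℤ)) := by
  refine ⟨four_dvd_ncard_nonreal_factorizations (hp.map _) (isRealPoly_map_algebraMap p) hnodup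
    (by omega) (by rw [natDegree_map, hdeg]; omega), ?_⟩
  have hmod := natCast_nu_eq_choose hk hre hr
  exact_mod_cast (ZMod.intCast_eq_intCast_iff_dvd_sub (nu k (2 * k) r)
    ((2 * k - 2).choose (k - 1)) 4).1 (by exact_mod_cast hmod)
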